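/- Let G be a group, let u = Σ_{g∈G} α_g g be an element of the integral group ring ℤG, let p be a prime, and let q = q'·m be a positive integer where m is the p-part of q and q' is not divisible by p. Let s ∈ G, let 𝒦 = { (g₁,…,g_q) ∈ G^q : g₁⋯g_q ∼ s }, let π be the cyclic-shift permutation of 𝒦, and for a positive divisor t of q let 𝒦*_t denote the union of the ⟨π⟩-orbits on 𝒦 of length exactly t. Then ν_s(u^q) ≡ Σ_{t | q'} Σ_{(g₁,…,g_q) ∈ 𝒦*_t} Π_{j=1}^{q'} α_{g_j} (mod p), where the outer sum runs over the positive divisors t of q'. -/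

import Mathlib

/-!
Expanding `u ^ q`, the partial augmentation `ν_s(u^q)` is the sum of `α_{g₁} ⋯ α_{g_q}` over the
tuples of `𝒦`. This summand is constant on `⟨π⟩`-orbits, so an orbit of length `t` contributes `t`
times a single term, which vanishes mod `p` when `p ∣ t`. As `t ∣ q = q' p^i`, the remaining orbits
have `t ∣ q'`; their tuples are `q'`-periodic, so `α_{g₁} ⋯ α_{g_q} = (α_{g₁} ⋯ α_{g_{q'}})^{p^i}`,
which is `α_{g₁} ⋯ α_{g_{q'}}` mod `p` by Fermat's little theorem.
-/

open scoped Classical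
open Finset Function

/-- The partial augmentation `ν_y(u)` of `u ∈ ℤG` at `y ∈ G`: the sum of the
coefficients of `u` over the conjugacy class of `y`. -/
noncomputable def pAug {G : Type*} [Group G] (y : G) (u : MonoidAlgebra ℤ G) : ℤ :=
  ∑ g ∈ (Finsupp.support u.coeff).filter (fun g => IsConj y g), u.coeff g

/-- The cyclic shift `π` sending `(g₁, g₂, …, g_q)` to `(g₂, …, g_q, g₁)`. -/
def cShift {G : Type*} (q : ℕ) (g : Fin q → G) : Fin q → G :=
  g ∘ finRotate q

theorem Function.Periodic.prod_range_mul {M : Type*} [CommMonoid M] {v : ℕ → M} {r : ℕ}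
    (hv : Periodic v r) (d : ℕ) : ∏ j ∈ range (r * d), v j = (∏ j ∈ range r, v j) ^ d := by
  induction d with
  | zero => simp
  | succ d ih =>
    rw [Nat.mul_succ, prod_range_add, ih, pow_succ]
    congr 1
    refine prod_congr rfl fun k _ => ?_
    simpa [add_comm, mul_comm] using hv.nat_mul d k

theorem Function.sum_filter_minimalPeriod_eq_zero {α R : Type*} [Semiring R] {f : α → α}
    {S : Finset α} (hS : Set.MapsTo f S S) {F : α → R} (hF : F ∘ f = F) {t : ℕ} (ht : t ≠ 0)
    (htR : (t : R) = 0) : ∑ x ∈ S with minimalPeriod f x = t, F x = 0 := by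
  -- the classes of `Setoid.ker (periodicOrbit f)` are the orbits: `t` points sharing one value of `F`
  refine sum_cancels_of_partition_cancels (Setoid.ker (periodicOrbit f)) fun x hx => ?_
  obtain ⟨hxS, hxt⟩ := mem_filter.1 hx
  have ht0 : 0 < t := Nat.pos_of_ne_zero ht
  have hx : x ∈ periodicPts f := minimalPeriod_pos_iff_mem_periodicPts.1 (hxt ▸ ht0)
  have horbit : {a ∈ S | minimalPeriod f a = t}.filter (Setoid.ker (periodicOrbit f) · x) =
      (range t).image fun n => f^[n] x := by
    ext a
    simp only [mem_filter, mem_image, mem_range, Setoid.ker_def]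
    constructor
    · rintro ⟨⟨-, ha⟩, horb⟩
      have ha' : a ∈ periodicPts f := minimalPeriod_pos_iff_mem_periodicPts.1 (ha ▸ ht0)
      obtain ⟨n, rfl⟩ := (mem_periodicOrbit_iff hx).1 (horb ▸ self_mem_periodicOrbit ha')
      exact ⟨n % t, Nat.mod_lt _ ht0, hxt ▸ iterate_mod_minimalPeriod_eq⟩
    · rintro ⟨n, -, rfl⟩
      exact ⟨⟨hS.iterate n hxS, hxt ▸ minimalPeriod_apply_iterate hx n⟩,
        periodicOrbit_apply_iterate_eq hx n⟩
  rw [horbit, sum_image fun m hm n hn => iterate_injOn_Iio_minimalPeriod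
    (hxt ▸ mem_range.1 hm) (hxt ▸ mem_range.1 hn)]
  have hFx (n : ℕ) : F (f^[n] x) = F x := congrFun (iterate_invariant hF n) x
  simp only [hFx, sum_const, card_range, nsmul_eq_mul, htR, zero_mul]

namespace MonoidAlgebra

theorem pow_eq_sum_piFinset {R M : Type*} [CommSemiring R] [Monoid M] (u : MonoidAlgebra R M)
    (N : ℕ) :
    u ^ N = ∑ g ∈ Fintype.piFinset fun _ : Fin N => u.coeff.support,
      single (List.ofFn g).prod (∏ j, u.coeff (g j)) := by
  induction N with
  | zero => simp [one_def]
  | succ N ih =>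
    rw [pow_succ', ih]
    nth_rw 1 [← sum_coeff_single u]
    rw [Finsupp.sum, sum_mul_sum, ← sum_product']
    have hcons := filter_piFinset_eq_map_consEquiv (fun _ : Fin (N + 1) => u.coeff.support)
      fun _ => True
    simp only [filter_true] at hcons
    rw [hcons, sum_map]
    refine sum_congr rfl fun ⟨a, g⟩ _ => ?_
    simp [single_mul_single, List.ofFn_succ, Fin.prod_univ_succ]

end MonoidAlgebra

open MonoidAlgebra in
theorem pAug_sum_single {G ι : Type*} [Group G] (y : G) (S : Finset ι) (h : ι → G) (c : ι → ℤ) :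
    pAug y (∑ i ∈ S, single (h i) (c i)) = ∑ i ∈ S with IsConj y (h i), c i := by
  have hpAug (x : MonoidAlgebra ℤ G) :
      pAug y x = x.coeff.sum fun g r => if IsConj y g then r else 0 :=
    sum_filter _ _
  rw [hpAug, coeff_sum, sum_filter]
  refine (Finsupp.sum_finsetSum_index (h := fun (g : G) (r : ℤ) => if IsConj y g then r else 0)
    (fun _ => ite_self 0) fun _ _ _ => ite_add_zero).symm.trans ?_
  exact sum_congr rfl fun i _ => Finsupp.sum_single_index (ite_self 0)

theorem pAug_pow {G : Type*} [Group G] (u : MonoidAlgebra ℤ G) (q : ℕ) (s : G) :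
    pAug s (u ^ q) = ∑ g ∈ Fintype.piFinset (fun _ : Fin q => u.coeff.support) with
      IsConj (List.ofFn g).prod s, ∏ j, u.coeff (g j) := by
  simp only [MonoidAlgebra.pow_eq_sum_piFinset, pAug_sum_single, isConj_comm]

section CyclicShift

open Fin.NatCast

variable {α : Type*} {q : ℕ}

theorem cShift_iterate_apply [NeZero q] (g : Fin q → α) (k : ℕ) (j : Fin q) :
    (cShift q)^[k] g j = g (j + k) := by
  induction k generalizing j with
  | zero => simp
  | succ k ih =>
    rw [iterate_succ_apply', cShift, comp_apply, ih, finRotate_apply, Nat.cast_succ, add_right_comm,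
      add_assoc]

theorem isPeriodicPt_cShift (g : Fin q → α) : IsPeriodicPt (cShift q) q g := by
  rcases q.eq_zero_or_pos with rfl | hq
  · exact isPeriodicPt_zero _ _
  · have : NeZero q := ⟨hq.ne'⟩
    funext j
    rw [cShift_iterate_apply, Fin.natCast_self, add_zero]

theorem Function.IsPeriodicPt.periodic_cShift [NeZero q] {g : Fin q → α} {r : ℕ}
    (hg : IsPeriodicPt (cShift q) r g) : Periodic (fun j : ℕ => g j) r := fun j => by
  show g ((j + r : ℕ) : Fin q) = g j
  rw [Nat.cast_add, ← cShift_iterate_apply g r, hg.eq]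

theorem Function.IsPeriodicPt.prod_cShift_eq_pow [NeZero q] {M : Type*} [CommMonoid M] (f : α → M)
    {g : Fin q → α} {r d : ℕ} (hg : IsPeriodicPt (cShift q) r g) (hq : q = r * d) (hr : r ≤ q) :
    ∏ j, f (g j) = (∏ j : Fin r, f (g (Fin.castLE hr j))) ^ d := by
  have hrange {N : ℕ} (hN : N ≤ q) :
      ∏ j : Fin N, f (g (Fin.castLE hN j)) = ∏ j ∈ range N, f (g j) := by
    rw [← Fin.prod_univ_eq_prod_range]
    refine prod_congr rfl fun j _ => ?_
    congr 2
    exact Fin.ext (Nat.mod_eq_of_lt (j.2.trans_le hN)).symm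
  subst hq
  calc ∏ j, f (g j) = ∏ j : Fin (r * d), f (g (Fin.castLE le_rfl j)) := rfl
    _ = _ := by rw [hrange, hrange]; exact (hg.periodic_cShift.comp f).prod_range_mul d

theorem Function.IsPeriodicPt.mem_piFinset_cShift [NeZero q] {g : Fin q → α} {r : ℕ}
    (hg : IsPeriodicPt (cShift q) r g) (hr0 : r ≠ 0) (hr : r ≤ q) {T : Finset α}
    (hT : ∀ j : Fin r, g (Fin.castLE hr j) ∈ T) : g ∈ Fintype.piFinset fun _ => T := by
  refine Fintype.mem_piFinset.2 fun j => ?_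
  have hj := hg.periodic_cShift.map_mod_nat j
  simp only [Fin.cast_val_eq_self] at hj
  rw [← hj]
  convert hT ⟨j % r, Nat.mod_lt _ (Nat.pos_of_ne_zero hr0)⟩ using 2
  exact Fin.ext (Nat.mod_eq_of_lt ((Nat.mod_lt _ (Nat.pos_of_ne_zero hr0)).trans_le hr))

theorem isConj_prod_ofFn_cShift {G : Type*} [Group G] (g : Fin q → G) :
    IsConj (List.ofFn (cShift q g)).prod (List.ofFn g).prod := by
  rcases q with _ | n
  · exact IsConj.refl _
  · have hinit : (fun i : Fin n => cShift (n + 1) g i.castSucc) = fun i => g i.succ := by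
      funext i
      rw [cShift, comp_apply, finRotate_apply, Fin.coeSucc_eq_succ]
    have hlast : cShift (n + 1) g (Fin.last n) = g 0 := congrArg g finRotate_last
    rw [List.ofFn_succ', List.ofFn_succ, List.prod_concat, List.prod_cons, hinit, hlast]
    exact isConj_iff.2 ⟨g 0, by group⟩

end CyclicShift

theorem sum_prod_filter_minimalPeriod_cShift_eq_zero {G R : Type*} [Group G] [CommSemiring R]
    (T : Finset G) (w : G → R) (s : G) {q t : ℕ} (ht : t ≠ 0) (htR : (t : R) = 0) :
    ∑ g ∈ Fintype.piFinset (fun _ : Fin q => T) with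
      IsConj (List.ofFn g).prod s ∧ minimalPeriod (cShift q) g = t, ∏ j, w (g j) = 0 := by
  rw [← filter_filter]
  refine sum_filter_minimalPeriod_eq_zero (fun g hg => ?_) (funext fun g => ?_) ht htR
  · simp only [coe_filter, Set.mem_ofPred_eq, Fintype.mem_piFinset] at hg ⊢
    exact ⟨fun j => hg.1 _, (isConj_prod_ofFn_cShift g).trans hg.2⟩
  · exact Equiv.prod_comp (finRotate q) fun j => w (g j)

theorem sum_prod_filter_isConj_eq_sum_divisors {G : Type*} [Group G] {p : ℕ} [Fact p.Prime]
    (T : Finset G) (w : G → ZMod p) (s : G) {q q' i : ℕ} [NeZero q] (hqm : q = q' * p ^ i)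
    (hle : q' ≤ q) :
    ∑ g ∈ Fintype.piFinset (fun _ : Fin q => T) with IsConj (List.ofFn g).prod s, ∏ j, w (g j) =
      ∑ t ∈ q'.divisors, ∑ g ∈ Fintype.piFinset (fun _ : Fin q => T) with
        IsConj (List.ofFn g).prod s ∧ minimalPeriod (cShift q) g = t,
          ∏ j : Fin q', w (g (Fin.castLE hle j)) := by
  have hdvd : q' ∣ q := ⟨_, hqm⟩
  rw [← sum_fiberwise_of_maps_to (g := minimalPeriod (cShift q)) (t := q.divisors)
    fun g _ => Nat.mem_divisors.2 ⟨(isPeriodicPt_cShift g).minimalPeriod_dvd, NeZero.ne q⟩]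
  simp only [filter_filter]
  rw [← sum_filter_add_sum_filter_not q.divisors (· ∣ q'),
    Nat.divisors_filter_dvd_of_dvd (NeZero.ne q) hdvd,
    sum_eq_zero (s := {t ∈ q.divisors | ¬t ∣ q'}), add_zero]
  · refine sum_congr rfl fun t ht => sum_congr rfl fun g hg => ?_
    obtain ⟨k, hk⟩ := Nat.dvd_of_mem_divisors ht
    have hg : IsPeriodicPt (cShift q) q' g :=
      hk ▸ (mem_filter.1 hg).2.2 ▸ (isPeriodicPt_minimalPeriod _ g).mul_const k
    rw [hg.prod_cShift_eq_pow w hqm hle, ZMod.pow_card_pow]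
  · intro t ht
    obtain ⟨⟨htq, hq⟩, htq'⟩ := mem_filter.1 ht |>.imp_left Nat.mem_divisors.1
    have hpt : p ∣ t := by
      by_contra hpt
      have hcop : t.Coprime (p ^ i) :=
        Nat.Coprime.pow_right i ((Nat.Prime.coprime_iff_not_dvd Fact.out).2 hpt).symm
      exact htq' (hcop.dvd_of_dvd_mul_right (hqm ▸ htq))
    exact sum_prod_filter_minimalPeriod_cShift_eq_zero T w s (ne_zero_of_dvd_ne_zero hq htq)
      ((ZMod.natCast_eq_zero_iff _ _).2 hpt)

theorem finsum_prod_castLE_eq_sum_piFinset {G R : Type*} [Group G] [CommSemiring R] (f : G →₀ R)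
    (s : G) {q q' t : ℕ} [NeZero q] (hle : q' ≤ q) (hq' : q' ≠ 0) (ht : t ∣ q') :
    ∑ᶠ g : Fin q → G, (if IsConj (List.ofFn g).prod s ∧ minimalPeriod (cShift q) g = t
        then ∏ j : Fin q', f (g (Fin.castLE hle j)) else 0) =
      ∑ g ∈ Fintype.piFinset (fun _ : Fin q => f.support) with
        IsConj (List.ofFn g).prod s ∧ minimalPeriod (cShift q) g = t,
          ∏ j : Fin q', f (g (Fin.castLE hle j)) := by
  rw [sum_filter]
  refine finsum_eq_sum_of_support_subset _ fun g hg => ?_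
  obtain ⟨⟨-, hgt⟩, hprod⟩ := ite_ne_right_iff.1 hg
  obtain ⟨k, rfl⟩ := ht
  have hg : IsPeriodicPt (cShift q) (t * k) g :=
    hgt ▸ (isPeriodicPt_minimalPeriod _ g).mul_const k
  exact hg.mem_piFinset_cShift hq' hle fun j =>
    Finsupp.mem_support_iff.2 fun h => hprod (prod_eq_zero (mem_univ j) h)

theorem nu_pow_q_congr_sum_orbits_general {G : Type*} [Group G] (u : MonoidAlgebra ℤ G)
    (p q q' m : ℕ) (hp : p.Prime) (hq : 0 < q) (hqm : q = q' * m)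
    (hm : ∃ i : ℕ, m = p ^ i) (s : G) :
    pAug s (u ^ q) ≡
      (∑ t ∈ q'.divisors,
        ∑ᶠ g : Fin q → G,
          if IsConj (List.ofFn g).prod s ∧ Function.minimalPeriod (cShift q) g = t
          then ∏ j : Fin q', u.coeff (g (Fin.castLE (Nat.le_of_dvd hq ⟨m, hqm⟩) j)) else 0)
      [ZMOD (p : ℤ)] := by
  obtain ⟨i, rfl⟩ := hm
  have : Fact p.Prime := ⟨hp⟩
  have : NeZero q := ⟨hq.ne'⟩
  have hq' : q' ≠ 0 := by rintro rfl; exact hq.ne' (by simpa using hqm)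
  rw [← ZMod.intCast_eq_intCast_iff, pAug_pow, Int.cast_sum]
  simp only [Int.cast_prod]
  rw [sum_prod_filter_isConj_eq_sum_divisors _ (fun x => (u.coeff x : ZMod p)) s hqm
    (Nat.le_of_dvd hq ⟨_, hqm⟩), Int.cast_sum]
  refine sum_congr rfl fun t ht => ?_
  rw [finsum_prod_castLE_eq_sum_piFinset _ s _ hq' (Nat.dvd_of_mem_divisors ht)]
  push_cast
  rfl

theorem nu_pow_q_congr_sum_orbits {G : Type*} [Group G] (u : MonoidAlgebra ℤ G)
    (p q q' m : ℕ) (hp : p.Prime) (hq : 0 < q) (hqm : q = q' * m)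
    (hm : ∃ i : ℕ, m = p ^ i) (hq'p : ¬ p ∣ q') (s : G) :
    pAug s (u ^ q) ≡
      (∑ t ∈ q'.divisors,
        ∑ᶠ g : Fin q → G,
          if IsConj (List.ofFn g).prod s ∧ Function.minimalPeriod (cShift q) g = t
          then ∏ j : Fin q', u.coeff (g (Fin.castLE (Nat.le_of_dvd hq ⟨m, hqm⟩) j)) else 0)
      [ZMOD (p : ℤ)] :=
  nu_pow_q_congr_sum_orbits_general u p q q' m hp hq hqm hm s
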